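/- arXiv:1807.01771 — 2 statements merged into one kernel-verified Lean document; each statement's English description precedes it below -/
import Mathlib

section
/- Under the assumptions above, if additionally the conditional distribution of E[Y|O] given g(O)=x is not a point mass for a set of x of positive probability, and U is strictly concave, then E[U(E[Y|g(O)])] > E[U(E[Y|O])]; i.e., uncertainty via classification has strictly positive bias while direct uncertainty prediction is unbiased. -/
/-!
Write `Z = E[Y|O]` and `W = E[Z|g(O)]`; by conditional independence `E[Y|g(O)] = W`. The
midpoint `V = (Z + W)/2` still has `E[V|g(O)] = W`, so conditional Jensen gives
`E U(V) ≤ E U(W)`. Strict concavity gives `U(V) > (U(Z) + U(W))/2` wherever `Z ≠ W`, which happens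
with positive probability, so `E U(V) > (E U(Z) + E U(W))/2`, and together `E U(Z) < E U(W)`.
All integrals are finite because a concave `U` lies below an affine function.
-/

open MeasureTheory ProbabilityTheory Set

section Affine

variable {E : Type*} [NormedAddCommGroup E] [NormedSpace ℝ E] {U : E → ℝ}

theorem ConcaveOn.exists_le_affine (hU : ConcaveOn ℝ univ U) (hUc : UpperSemicontinuous U) :
    ∃ (l : E →L[ℝ] ℝ) (c : ℝ), ∀ x, U x ≤ l x + c := by
  obtain ⟨l, c, hle, -⟩ := hU.neg.exists_affine_le_of_lt (𝕜 := ℝ) (mem_univ 0)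
    (sub_one_lt (-U 0)) isClosed_univ (lowerSemicontinuousOn_univ_iff.2 hUc.neg)
  refine ⟨-l, -c, fun x => ?_⟩
  have hx : l x + c ≤ -U x := hle ⟨x, mem_univ x⟩
  rw [neg_apply]
  linarith

end Affine

section Integral

variable {α : Type*} [MeasurableSpace α] {μ : Measure α}

theorem integral_lt_integral_of_ae_le_of_measure_setOf_lt_ne_zero {f g : α → ℝ}
    (hf : Integrable f μ) (hg : Integrable g μ) (hfg : f ≤ᵐ[μ] g)
    (hlt : μ {ω | f ω < g ω} ≠ 0) :
    ∫ ω, f ω ∂μ < ∫ ω, g ω ∂μ := by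
  have hsupp : {ω | f ω < g ω} ⊆ Function.support (g - f) := fun ω h => (sub_pos.2 h).ne'
  have hpos : 0 < ∫ ω, (g - f) ω ∂μ :=
    (integral_pos_iff_support_of_nonneg_ae (hfg.mono fun ω h => sub_nonneg.2 h) (hg.sub hf)).2
      ((pos_iff_ne_zero.2 hlt).trans_le (measure_mono hsupp))
  rw [Pi.sub_def, integral_sub hg hf] at hpos
  linarith

end Integral

section Jensen

variable {α E : Type*} {m m0 : MeasurableSpace α} {μ : Measure[m0] α} [IsFiniteMeasure μ]
  [NormedAddCommGroup E] [NormedSpace ℝ E] {U : E → ℝ} {f : α → E}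

theorem ConcaveOn.integrable_comp_of_le (hU : ConcaveOn ℝ univ U) (hUc : Continuous U)
    (hf : Integrable f μ) {φ : α → ℝ} (hφ : Integrable φ μ) (hφU : φ ≤ᵐ[μ] U ∘ f) :
    Integrable (U ∘ f) μ := by
  obtain ⟨l, c, hlc⟩ := hU.exists_le_affine hUc.upperSemicontinuous
  exact integrable_of_le_of_le (hUc.comp_aestronglyMeasurable hf.aestronglyMeasurable) hφU
    (Filter.Eventually.of_forall fun ω => hlc (f ω))
    hφ ((l.integrable_comp hf).add (integrable_const c))

variable [FiniteDimensional ℝ E]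

theorem ConcaveOn.integrable_comp_condExp (hm : m ≤ m0) (hU : ConcaveOn ℝ univ U)
    (hf : Integrable f μ) (hUf : Integrable (U ∘ f) μ) :
    Integrable (U ∘ μ[f | m]) μ :=
  hU.integrable_comp_of_le (continuousOn_univ.1 (hU.continuousOn isOpen_univ)) integrable_condExp
    integrable_condExp (hU.condExp_map_le_of_finiteDimensional hm hf hUf)

theorem ConcaveOn.integral_comp_le_integral_comp_condExp (hm : m ≤ m0) (hU : ConcaveOn ℝ univ U)
    (hf : Integrable f μ) (hUf : Integrable (U ∘ f) μ) :
    ∫ ω, U (f ω) ∂μ ≤ ∫ ω, U (μ[f | m] ω) ∂μ := by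
  rw [← integral_condExp hm]
  exact integral_mono_ae integrable_condExp (hU.integrable_comp_condExp hm hf hUf)
    (hU.condExp_map_le_of_finiteDimensional hm hf hUf)

theorem StrictConcaveOn.integral_comp_lt_integral_comp_condExp (hm : m ≤ m0)
    (hU : StrictConcaveOn ℝ univ U) (hf : Integrable f μ) (hUf : Integrable (U ∘ f) μ)
    (hne : ¬ f =ᵐ[μ] μ[f | m]) :
    ∫ ω, U (f ω) ∂μ < ∫ ω, U (μ[f | m] ω) ∂μ := by
  set W := μ[f | m]
  have hUc : Continuous U := continuousOn_univ.1 (hU.concaveOn.continuousOn isOpen_univ)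
  have hUW : Integrable (U ∘ W) μ := hU.concaveOn.integrable_comp_condExp hm hf hUf
  set V : α → E := (1 / 2 : ℝ) • f + (1 / 2 : ℝ) • W
  set A : α → ℝ := fun ω => (1 / 2 : ℝ) * U (f ω) + (1 / 2 : ℝ) * U (W ω)
  have hA : Integrable A μ := (hUf.const_mul _).add (hUW.const_mul _)
  have hV : Integrable V μ := (hf.smul _).add (integrable_condExp.smul _)
  have hAV : ∀ ω, A ω ≤ U (V ω) := fun ω =>
    hU.concaveOn.2 (mem_univ _) (mem_univ _) (by norm_num) (by norm_num) (add_halves 1)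
  have hUV : Integrable (U ∘ V) μ :=
    hU.concaveOn.integrable_comp_of_le hUc hV hA (Filter.Eventually.of_forall hAV)
  have hVW : μ[V | m] =ᵐ[μ] W := by
    have hWW : μ[W | m] = W :=
      condExp_of_stronglyMeasurable hm stronglyMeasurable_condExp integrable_condExp
    filter_upwards [condExp_add (hf.smul (1 / 2 : ℝ)) (integrable_condExp.smul (1 / 2 : ℝ)) m,
      condExp_smul (1 / 2 : ℝ) f m, condExp_smul (1 / 2 : ℝ) W m] with ω hadd hf' hW'
    rw [hadd, Pi.add_apply, hf', hW', hWW, Pi.smul_apply, ← add_smul, add_halves, one_smul]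
  have hlt : ∫ ω, A ω ∂μ < ∫ ω, U (V ω) ∂μ := by
    refine integral_lt_integral_of_ae_le_of_measure_setOf_lt_ne_zero hA hUV
      (Filter.Eventually.of_forall hAV) fun h => hne (ae_iff.2 (measure_mono_null ?_ h))
    exact fun ω hω => hU.2 (mem_univ _) (mem_univ _) hω (by norm_num) (by norm_num) (add_halves 1)
  have hle : ∫ ω, U (V ω) ∂μ ≤ ∫ ω, U (W ω) ∂μ := by
    calc ∫ ω, U (V ω) ∂μ ≤ ∫ ω, U (μ[V | m] ω) ∂μ :=
          hU.concaveOn.integral_comp_le_integral_comp_condExp hm hV hUV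
      _ = ∫ ω, U (W ω) ∂μ := integral_congr_ae (hVW.fun_comp U)
  have hAint : ∫ ω, A ω ∂μ = (1 / 2) * ∫ ω, U (f ω) ∂μ + (1 / 2) * ∫ ω, U (W ω) ∂μ :=
    (integral_add (hUf.const_mul _) (hUW.const_mul _)).trans
      (by rw [integral_const_mul, integral_const_mul]; rfl)
  linarith

end Jensen

theorem uvc_strict_bias_general {Ω β γ : Type*} [m0 : MeasurableSpace Ω]
    [MeasurableSpace β] [MeasurableSpace γ]
    (μ : Measure Ω) [IsProbabilityMeasure μ] {k : ℕ}
    (Y : Ω → (Fin k → ℝ)) (O : Ω → β) (g : β → γ)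
    (hle : MeasurableSpace.comap (g ∘ O) inferInstance ≤ m0)
    (U : (Fin k → ℝ) → ℝ)
    (hU : StrictConcaveOn ℝ Set.univ U)
    -- conditional independence of `Y` and `g(O)` given `O`
    (hci : μ[Y | MeasurableSpace.comap (g ∘ O) inferInstance]
      =ᵐ[μ] μ[(μ[Y | MeasurableSpace.comap O inferInstance]) |
        MeasurableSpace.comap (g ∘ O) inferInstance])
    -- the conditional law of `E[Y|O]` given `g(O)` is not a point mass
    (hnp : ¬ (μ[Y | MeasurableSpace.comap O inferInstance]
      =ᵐ[μ] μ[(μ[Y | MeasurableSpace.comap O inferInstance]) |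
        MeasurableSpace.comap (g ∘ O) inferInstance]))
    (hint : Integrable
      (fun ω => U ((μ[Y | MeasurableSpace.comap O inferInstance]) ω)) μ) :
    ∫ ω, U ((μ[Y | MeasurableSpace.comap (g ∘ O) inferInstance]) ω) ∂μ
      > ∫ ω, U ((μ[Y | MeasurableSpace.comap O inferInstance]) ω) ∂μ :=
  (hU.integral_comp_lt_integral_comp_condExp hle integrable_condExp hint hnp).trans_eq
    (integral_congr_ae (hci.fun_comp U)).symm

/-- Strictly positive bias of uncertainty via classification: if `U` is strictly
concave and the conditional distribution of `Z = E[Y|O]` given `g(O)` is not a.s.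
a point mass (i.e. `Z` is not a.e. equal to `E[Z | g(O)]`), then
`E[U(E[Y | g(O)])] > E[U(E[Y|O])]`. -/
theorem uvc_strict_bias {Ω β γ : Type*} [m0 : MeasurableSpace Ω]
    [MeasurableSpace β] [MeasurableSpace γ]
    (μ : Measure Ω) [IsProbabilityMeasure μ] {k : ℕ}
    (Y : Ω → (Fin k → ℝ)) (O : Ω → β) (g : β → γ)
    (hO : Measurable O) (hg : Measurable g)
    (hY : Integrable Y μ)
    (hle : MeasurableSpace.comap (g ∘ O) inferInstance ≤ m0)
    (U : (Fin k → ℝ) → ℝ)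
    (hU : StrictConcaveOn ℝ Set.univ U)
    -- conditional independence of `Y` and `g(O)` given `O`
    (hci : μ[Y | MeasurableSpace.comap (g ∘ O) inferInstance]
      =ᵐ[μ] μ[(μ[Y | MeasurableSpace.comap O inferInstance]) |
        MeasurableSpace.comap (g ∘ O) inferInstance])
    -- the conditional law of `E[Y|O]` given `g(O)` is not a point mass
    (hnp : ¬ (μ[Y | MeasurableSpace.comap O inferInstance]
      =ᵐ[μ] μ[(μ[Y | MeasurableSpace.comap O inferInstance]) |
        MeasurableSpace.comap (g ∘ O) inferInstance]))
    (hint : Integrable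
      (fun ω => U ((μ[Y | MeasurableSpace.comap O inferInstance]) ω)) μ)
    (hint' : Integrable
      (fun ω => U ((μ[Y | MeasurableSpace.comap (g ∘ O) inferInstance]) ω)) μ) :
    ∫ ω, U ((μ[Y | MeasurableSpace.comap (g ∘ O) inferInstance]) ω) ∂μ
      > ∫ ω, U ((μ[Y | MeasurableSpace.comap O inferInstance]) ω) ∂μ :=
  uvc_strict_bias_general (m0 := m0) μ Y O g hle U hU hci hnp hint
end

section
/- Let U_var(p) = Σ_l c_l² p_l - (Σ_l c_l p_l)² for fixed real grade values c_1,...,c_k, defined on the probability simplex. Then with Z = E[Y|O], the bias of uncertainty via classification equals U_var(E[Z | g(O)]) - E[U_var(Z) | g(O)] = Var( Σ_l c_l Z_l | g(O) ), and hence the overall bias is E[ Var( Σ_l c_l E[Y_l|O] | g(O) ) ]. -/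
/-!
With `S = ∑ l, c l * Z l`, conditional expectation is linear, so
`E[U_var(Z) | g(O)] = ∑ l, c l ^ 2 * E[Z l | g(O)] - E[S ^ 2 | g(O)]`, whereas
`U_var(E[Z | g(O)]) = ∑ l, c l ^ 2 * E[Z l | g(O)] - E[S | g(O)] ^ 2`: the linear terms cancel and
the difference is the conditional variance of `S`. For the overall bias, conditional independence
turns `E[Y | g(O)]` into `E[Z | g(O)]`, and the tower property `E[E[U_var(Z) | g(O)]] = E[U_var(Z)]`
reduces the difference of integrals to the integral of the pointwise identity.
-/

open MeasureTheory ProbabilityTheory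

section

variable {Ω ι : Type*} {m m0 : MeasurableSpace Ω} {μ : Measure Ω} [Fintype ι]

/-- The paper's `U_var(p)`: the variance of a grade equal to `c i` with probability `p i`. -/
def gradeVar (c p : ι → ℝ) : ℝ :=
  ∑ i, c i ^ 2 * p i - (∑ i, c i * p i) ^ 2

lemma condExp_sum_mul (a : ι → ℝ) {f : ι → Ω → ℝ} (hf : ∀ i, Integrable (f i) μ) :
    μ[fun ω => ∑ i, a i * f i ω | m] =ᵐ[μ] fun ω => ∑ i, a i * μ[f i | m] ω := by
  have hsmul : ∀ᵐ ω ∂μ, ∀ i, μ[a i • f i | m] ω = a i * μ[f i | m] ω :=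
    ae_all_iff.2 fun i => condExp_smul (a i) (f i) m
  have hfun : (fun ω => ∑ i, a i * f i ω) = ∑ i, a i • f i := by
    ext ω; simp [Finset.sum_apply]
  rw [hfun]
  filter_upwards [condExp_finsetSum (s := Finset.univ) (fun i _ => (hf i).smul (a i)) m, hsmul]
    with ω hsum hsmul
  rw [hsum, Finset.sum_apply]
  exact Finset.sum_congr rfl fun i _ => hsmul i

variable {Z : Ω → ι → ℝ}

lemma integrable_sum_mul_sq (c : ι → ℝ) (hZ : ∀ i, MemLp (fun ω => Z ω i) 2 μ) :
    Integrable (fun ω => (∑ i, c i * Z ω i) ^ 2) μ :=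
  (memLp_finsetSum _ fun i _ => (hZ i).const_mul (c i)).integrable_sq

lemma integrable_sum_mul (a : ι → ℝ) (hZ : ∀ i, Integrable (fun ω => Z ω i) μ) :
    Integrable (fun ω => ∑ i, a i * Z ω i) μ :=
  integrable_finsetSum _ fun i _ => (hZ i).const_mul (a i)

lemma gradeVar_condExp_sub_condExp_gradeVar [IsFiniteMeasure μ] (c : ι → ℝ)
    (hZ : ∀ i, MemLp (fun ω => Z ω i) 2 μ) :
    ∀ᵐ ω ∂μ, gradeVar c (fun i => μ[fun ω => Z ω i | m] ω) - μ[fun ω => gradeVar c (Z ω) | m] ω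
      = μ[fun ω => (∑ i, c i * Z ω i) ^ 2 | m] ω - (μ[fun ω => ∑ i, c i * Z ω i | m] ω) ^ 2 := by
  have hZi : ∀ i, Integrable (fun ω => Z ω i) μ := fun i => (hZ i).integrable one_le_two
  have hsub : μ[fun ω => gradeVar c (Z ω) | m] =ᵐ[μ]
      μ[fun ω => ∑ i, c i ^ 2 * Z ω i | m] - μ[fun ω => (∑ i, c i * Z ω i) ^ 2 | m] :=
    condExp_sub (integrable_sum_mul _ hZi) (integrable_sum_mul_sq c hZ) m
  filter_upwards [hsub, condExp_sum_mul (fun i => c i ^ 2) hZi, condExp_sum_mul c hZi]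
    with ω hsub hsq hlin
  rw [hsub, Pi.sub_apply, hsq, hlin, gradeVar]
  ring

lemma integral_gradeVar_condExp_sub_integral_gradeVar [IsFiniteMeasure μ] (c : ι → ℝ)
    (hZ : ∀ i, MemLp (fun ω => Z ω i) 2 μ) (hm : m ≤ m0) :
    ∫ ω, gradeVar c (fun i => μ[fun ω => Z ω i | m] ω) ∂μ - ∫ ω, gradeVar c (Z ω) ∂μ
      = ∫ ω, (μ[fun ω => (∑ i, c i * Z ω i) ^ 2 | m] ω
          - (μ[fun ω => ∑ i, c i * Z ω i | m] ω) ^ 2) ∂μ := by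
  have hcondExp : ∀ i, MemLp (fun ω => μ[fun ω => Z ω i | m] ω) 2 μ :=
    fun i => (hZ i).condExp one_le_two
  have hint : Integrable (fun ω => gradeVar c (fun i => μ[fun ω => Z ω i | m] ω)) μ :=
    (integrable_sum_mul _ fun i => (hcondExp i).integrable one_le_two).sub
      (integrable_sum_mul_sq c hcondExp)
  rw [← integral_condExp hm (f := fun ω => gradeVar c (Z ω)), ← integral_sub hint integrable_condExp]
  exact integral_congr_ae (gradeVar_condExp_sub_condExp_gradeVar c hZ)

end

theorem uvc_bias_var_general {Ω β γ : Type*} [m0 : MeasurableSpace Ω]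
    [MeasurableSpace β] [MeasurableSpace γ]
    (μ : Measure Ω) [IsProbabilityMeasure μ] {k : ℕ} (c : Fin k → ℝ)
    (Y : Ω → (Fin k → ℝ)) (O : Ω → β) (g : β → γ)
    (hle : MeasurableSpace.comap (g ∘ O) inferInstance ≤ m0)
    (hmem : ∀ l : Fin k,
      MemLp (fun ω => (μ[Y | MeasurableSpace.comap O inferInstance]) ω l) 2 μ)
    -- conditional independence of `Y` and `g(O)` given `O`
    (hci : μ[Y | MeasurableSpace.comap (g ∘ O) inferInstance]
      =ᵐ[μ] μ[(μ[Y | MeasurableSpace.comap O inferInstance]) |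
        MeasurableSpace.comap (g ∘ O) inferInstance]) :
    (∀ᵐ ω ∂μ,
      ((∑ l : Fin k, (c l) ^ 2 *
          (μ[(fun ω' => (μ[Y | MeasurableSpace.comap O inferInstance]) ω' l) |
            MeasurableSpace.comap (g ∘ O) inferInstance]) ω)
        - (∑ l : Fin k, c l *
          (μ[(fun ω' => (μ[Y | MeasurableSpace.comap O inferInstance]) ω' l) |
            MeasurableSpace.comap (g ∘ O) inferInstance]) ω) ^ 2)
        - (μ[(fun ω' =>
            (∑ l : Fin k, (c l) ^ 2 * (μ[Y | MeasurableSpace.comap O inferInstance]) ω' l)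
            - (∑ l : Fin k, c l * (μ[Y | MeasurableSpace.comap O inferInstance]) ω' l) ^ 2) |
            MeasurableSpace.comap (g ∘ O) inferInstance]) ω
      = (μ[(fun ω' =>
            (∑ l : Fin k, c l * (μ[Y | MeasurableSpace.comap O inferInstance]) ω' l) ^ 2) |
            MeasurableSpace.comap (g ∘ O) inferInstance]) ω
        - ((μ[(fun ω' =>
            ∑ l : Fin k, c l * (μ[Y | MeasurableSpace.comap O inferInstance]) ω' l) |
            MeasurableSpace.comap (g ∘ O) inferInstance]) ω) ^ 2)
    ∧
    (∫ ω, ((∑ l : Fin k, (c l) ^ 2 *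
            (μ[Y | MeasurableSpace.comap (g ∘ O) inferInstance]) ω l)
          - (∑ l : Fin k, c l *
            (μ[Y | MeasurableSpace.comap (g ∘ O) inferInstance]) ω l) ^ 2) ∂μ
      - ∫ ω, ((∑ l : Fin k, (c l) ^ 2 *
            (μ[Y | MeasurableSpace.comap O inferInstance]) ω l)
          - (∑ l : Fin k, c l *
            (μ[Y | MeasurableSpace.comap O inferInstance]) ω l) ^ 2) ∂μ
      = ∫ ω, ((μ[(fun ω' =>
            (∑ l : Fin k, c l * (μ[Y | MeasurableSpace.comap O inferInstance]) ω' l) ^ 2) |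
            MeasurableSpace.comap (g ∘ O) inferInstance]) ω
        - ((μ[(fun ω' =>
            ∑ l : Fin k, c l * (μ[Y | MeasurableSpace.comap O inferInstance]) ω' l) |
            MeasurableSpace.comap (g ∘ O) inferInstance]) ω) ^ 2) ∂μ) := by
  set mG := MeasurableSpace.comap (g ∘ O) inferInstance
  set Z := μ[Y | MeasurableSpace.comap O inferInstance]
  refine ⟨gradeVar_condExp_sub_condExp_gradeVar c hmem, ?_⟩
  have hcoord : ∀ᵐ ω ∂μ, ∀ l, μ[Y | mG] ω l = μ[fun ω' => Z ω' l | mG] ω := by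
    filter_upwards [hci, ae_all_iff.2 fun l =>
      (ContinuousLinearMap.proj l).comp_condExp_comm (m := mG) (integrable_condExp (f := Y))]
      with ω hYZ hZl l
    rw [hYZ]
    exact hZl l
  rw [← integral_gradeVar_condExp_sub_integral_gradeVar c hmem hle]
  congr 1
  exact integral_congr_ae (hcoord.mono fun ω h => congrArg (gradeVar c) (funext h))

/-- Bias of uncertainty via classification for
`U_var(p) = ∑ l, c l ^ 2 * p l - (∑ l, c l * p l) ^ 2`: with `Z = E[Y|O]`, a.s.
`U_var(E[Z|g(O)]) - E[U_var(Z)|g(O)] = Var(∑ l, c l * Z_l | g(O))`, and hence the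
overall bias equals `E[Var(∑ l, c l * E[Y_l|O] | g(O))]`. -/
theorem uvc_bias_var {Ω β γ : Type*} [m0 : MeasurableSpace Ω]
    [MeasurableSpace β] [MeasurableSpace γ]
    (μ : Measure Ω) [IsProbabilityMeasure μ] {k : ℕ} (c : Fin k → ℝ)
    (Y : Ω → (Fin k → ℝ)) (O : Ω → β) (g : β → γ)
    (hO : Measurable O) (hg : Measurable g)
    (hY : Integrable Y μ)
    (hle : MeasurableSpace.comap (g ∘ O) inferInstance ≤ m0)
    (hmem : ∀ l : Fin k,
      MemLp (fun ω => (μ[Y | MeasurableSpace.comap O inferInstance]) ω l) 2 μ)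
    -- conditional independence of `Y` and `g(O)` given `O`
    (hci : μ[Y | MeasurableSpace.comap (g ∘ O) inferInstance]
      =ᵐ[μ] μ[(μ[Y | MeasurableSpace.comap O inferInstance]) |
        MeasurableSpace.comap (g ∘ O) inferInstance]) :
    (∀ᵐ ω ∂μ,
      ((∑ l : Fin k, (c l) ^ 2 *
          (μ[(fun ω' => (μ[Y | MeasurableSpace.comap O inferInstance]) ω' l) |
            MeasurableSpace.comap (g ∘ O) inferInstance]) ω)
        - (∑ l : Fin k, c l *
          (μ[(fun ω' => (μ[Y | MeasurableSpace.comap O inferInstance]) ω' l) |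
            MeasurableSpace.comap (g ∘ O) inferInstance]) ω) ^ 2)
        - (μ[(fun ω' =>
            (∑ l : Fin k, (c l) ^ 2 * (μ[Y | MeasurableSpace.comap O inferInstance]) ω' l)
            - (∑ l : Fin k, c l * (μ[Y | MeasurableSpace.comap O inferInstance]) ω' l) ^ 2) |
            MeasurableSpace.comap (g ∘ O) inferInstance]) ω
      = (μ[(fun ω' =>
            (∑ l : Fin k, c l * (μ[Y | MeasurableSpace.comap O inferInstance]) ω' l) ^ 2) |
            MeasurableSpace.comap (g ∘ O) inferInstance]) ω
        - ((μ[(fun ω' =>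
            ∑ l : Fin k, c l * (μ[Y | MeasurableSpace.comap O inferInstance]) ω' l) |
            MeasurableSpace.comap (g ∘ O) inferInstance]) ω) ^ 2)
    ∧
    (∫ ω, ((∑ l : Fin k, (c l) ^ 2 *
            (μ[Y | MeasurableSpace.comap (g ∘ O) inferInstance]) ω l)
          - (∑ l : Fin k, c l *
            (μ[Y | MeasurableSpace.comap (g ∘ O) inferInstance]) ω l) ^ 2) ∂μ
      - ∫ ω, ((∑ l : Fin k, (c l) ^ 2 *
            (μ[Y | MeasurableSpace.comap O inferInstance]) ω l)
          - (∑ l : Fin k, c l *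
            (μ[Y | MeasurableSpace.comap O inferInstance]) ω l) ^ 2) ∂μ
      = ∫ ω, ((μ[(fun ω' =>
            (∑ l : Fin k, c l * (μ[Y | MeasurableSpace.comap O inferInstance]) ω' l) ^ 2) |
            MeasurableSpace.comap (g ∘ O) inferInstance]) ω
        - ((μ[(fun ω' =>
            ∑ l : Fin k, c l * (μ[Y | MeasurableSpace.comap O inferInstance]) ω' l) |
            MeasurableSpace.comap (g ∘ O) inferInstance]) ω) ^ 2) ∂μ) :=
  uvc_bias_var_general (m0 := m0) μ c Y O g hle hmem hci
end
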